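/- Let K be a compact Hausdorff space and let 𝒞(K) be the algebra of continuous complex-valued functions on K. Then any complete submultiplicative norm ‖·‖ on 𝒞(K) (i.e., any norm turning 𝒞(K) into a Banach algebra) is equivalent to the supremum norm ‖·‖_∞. -/

import Mathlib

/-- A (not a priori complete) submultiplicative algebra norm on a complex algebra `A`. -/
structure AlgebraNormOn (A : Type*) [Ring A] [Algebra ℂ A] where
  toFun : A → ℝ
  nonneg' : ∀ a, 0 ≤ toFun a
  eq_zero_iff' : ∀ a, toFun a = 0 ↔ a = 0
  add_le' : ∀ a b, toFun (a + b) ≤ toFun a + toFun b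
  smul_eq' : ∀ (c : ℂ) (a : A), toFun (c • a) = ‖c‖ * toFun a
  mul_le' : ∀ a b, toFun (a * b) ≤ toFun a * toFun b

/-- Completeness of an algebra norm: every Cauchy sequence for the norm converges
with respect to the norm. -/
def AlgebraNormOn.IsComplete {A : Type*} [Ring A] [Algebra ℂ A]
    (n : AlgebraNormOn A) : Prop :=
  ∀ u : ℕ → A, (∀ ε : ℝ, 0 < ε → ∃ N, ∀ m ≥ N, ∀ k ≥ N, n.toFun (u m - u k) < ε) →
    ∃ a : A, Filter.Tendsto (fun m => n.toFun (u m - a)) Filter.atTop (nhds 0)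

/-!
The identity map from `𝒞(K)` with the norm `n` to `𝒞(K)` with the sup norm is bounded: the value
`f x` lies in the spectrum of `f`, and in any Banach algebra a spectral value `λ` of `a` satisfies
`|λ| ≤ ‖a‖ ‖1‖`. By the open mapping theorem its inverse is bounded as well.
-/

theorem AlgebraNormOn.map_neg {A : Type*} [Ring A] [Algebra ℂ A] (n : AlgebraNormOn A) (a : A) :
    n.toFun (-a) = n.toFun a := by
  simpa using n.smul_eq' (-1) a

def WithAlgebraNorm {A : Type*} [Ring A] [Algebra ℂ A] (_n : AlgebraNormOn A) := A

namespace WithAlgebraNorm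

variable {A : Type*} [Ring A] [Algebra ℂ A] (n : AlgebraNormOn A)

instance : Ring (WithAlgebraNorm n) := inferInstanceAs (Ring A)

instance : Algebra ℂ (WithAlgebraNorm n) := inferInstanceAs (Algebra ℂ A)

noncomputable instance : NormedAddCommGroup (WithAlgebraNorm n) :=
  AddGroupNorm.toNormedAddCommGroup
    { toFun := n.toFun
      map_zero' := (n.eq_zero_iff' 0).mpr rfl
      neg' := n.map_neg
      add_le' := n.add_le'
      eq_zero_of_map_eq_zero' := fun a => (n.eq_zero_iff' a).mp }

noncomputable instance : NormedRing (WithAlgebraNorm n) where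
  dist_eq _ _ := rfl
  norm_mul_le := n.mul_le'

noncomputable instance : NormedAlgebra ℂ (WithAlgebraNorm n) where
  norm_smul_le c a := (n.smul_eq' c a).le

theorem completeSpace {n : AlgebraNormOn A} (hn : n.IsComplete) :
    CompleteSpace (WithAlgebraNorm n) := by
  refine Metric.complete_of_cauchySeq_tendsto fun u hu => ?_
  rw [Metric.cauchySeq_iff] at hu
  simp only [dist_eq_norm] at hu
  obtain ⟨a, ha⟩ := hn u hu
  exact ⟨a, tendsto_iff_norm_sub_tendsto_zero.mpr ha⟩

def linearEquiv : WithAlgebraNorm n ≃ₗ[ℂ] A := LinearEquiv.refl ℂ A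

end WithAlgebraNorm

namespace AlgebraNormOn

variable {K : Type*} [TopologicalSpace K] [CompactSpace K]

theorem norm_le_toFun_mul_toFun_one {n : AlgebraNormOn C(K, ℂ)} (hn : n.IsComplete)
    (f : C(K, ℂ)) : ‖f‖ ≤ n.toFun f * n.toFun 1 := by
  have := WithAlgebraNorm.completeSpace hn
  refine (ContinuousMap.norm_le f (mul_nonneg (n.nonneg' f) (n.nonneg' 1))).mpr fun x => ?_
  have hx : f x ∈ spectrum ℂ f := by
    rw [ContinuousMap.spectrum_eq_range]
    exact Set.mem_range_self x
  exact spectrum.norm_le_norm_mul_of_mem (A := WithAlgebraNorm n) hx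

end AlgebraNormOn

theorem continuousMap_complete_norm_equiv_sup_general (K : Type*) [TopologicalSpace K]
    [CompactSpace K]
    (n : AlgebraNormOn C(K, ℂ)) (hn : n.IsComplete) :
    ∃ C D : ℝ, 0 < C ∧ 0 < D ∧
      ∀ f : C(K, ℂ), n.toFun f ≤ C * ‖f‖ ∧ ‖f‖ ≤ D * n.toFun f := by
  have := WithAlgebraNorm.completeSpace hn
  -- `max 1 _` since `n.toFun 1 = 0` when `K` is empty.
  have hsup (f : C(K, ℂ)) : ‖f‖ ≤ max 1 (n.toFun 1) * n.toFun f :=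
    calc ‖f‖ ≤ n.toFun f * n.toFun 1 := n.norm_le_toFun_mul_toFun_one hn f
      _ ≤ max 1 (n.toFun 1) * n.toFun f := by
        rw [mul_comm]
        gcongr
        · exact n.nonneg' f
        · exact le_max_right _ _
  let e := WithAlgebraNorm.linearEquiv n
  have he : Continuous e := AddMonoidHomClass.continuous_of_bound e _ hsup
  obtain ⟨C, hC, hCe⟩ := (e.toContinuousLinearEquivOfContinuous he).symm.toContinuousLinearMap.bound
  exact ⟨C, max 1 (n.toFun 1), hC, lt_max_of_lt_left one_pos, fun f => ⟨hCe f, hsup f⟩⟩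

/-- For a compact Hausdorff space `K`, any complete submultiplicative norm on `𝒞(K)`
(i.e. any norm making `𝒞(K)` a Banach algebra) is equivalent to the supremum norm
(which is the canonical norm `‖·‖` on `C(K, ℂ)`). -/
theorem continuousMap_complete_norm_equiv_sup (K : Type*) [TopologicalSpace K]
    [CompactSpace K] [T2Space K]
    (n : AlgebraNormOn C(K, ℂ)) (hn : n.IsComplete) :
    ∃ C D : ℝ, 0 < C ∧ 0 < D ∧
      ∀ f : C(K, ℂ), n.toFun f ≤ C * ‖f‖ ∧ ‖f‖ ≤ D * n.toFun f :=
  continuousMap_complete_norm_equiv_sup_general K n hn
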